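/- arXiv:2408.00559 — 4 statements merged into one kernel-verified Lean document; each statement's English description precedes it below -/
import Mathlib

section
/- Suppose q_1,…,q_N are integers with |q_l| ≤ Q_l for nonnegative integers Q_l, and q_1 = − Σ_{l=2}^N q_l · ∏_{r=1}^{l−1} (Q_r + 1). Then q_l = 0 for all l = 1,…,N. -/
lemma Icc_insert_left {a b : ℕ} (h : a ≤ b) :
    Finset.Icc a b = insert a (Finset.Icc (a + 1) b) := by
  ext x; simp only [Finset.mem_Icc, Finset.mem_insert]; omega

lemma mixed_radix_aux (N : ℕ) (q : ℕ → ℤ) (Q : ℕ → ℕ) :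
    ∀ n a, 1 ≤ a → a + n = N + 1 →
    (∀ l ∈ Finset.Icc a N, |q l| ≤ (Q l : ℤ)) →
    (∑ l ∈ Finset.Icc a N, q l * ∏ r ∈ Finset.Icc a (l - 1), ((Q r : ℤ) + 1)) = 0 →
    ∀ l ∈ Finset.Icc a N, q l = 0 := by
  intro n
  induction n with
  | zero =>
    intro a ha1 haN hq hsum l hl
    simp only [Finset.mem_Icc] at hl
    omega
  | succ n ih =>
    intro a ha1 haN hq hsum l hl
    have haN' : a ≤ N := by omega
    have hsplit : Finset.Icc a N = insert a (Finset.Icc (a + 1) N) := by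
      exact Icc_insert_left haN'
    have hsum' : q a + (((Q a : ℤ) + 1)) *
        (∑ l ∈ Finset.Icc (a + 1) N, q l * ∏ r ∈ Finset.Icc (a + 1) (l - 1), ((Q r : ℤ) + 1)) = 0 := by
      rw [hsplit, Finset.sum_insert (by simp)] at hsum
      have hempty : Finset.Icc a (a - 1) = ∅ := by
        apply Finset.Icc_eq_empty; omega
      rw [hempty, Finset.prod_empty, mul_one] at hsum
      rw [Finset.mul_sum]
      convert hsum using 2
      apply Finset.sum_congr rfl
      intro x hx
      simp only [Finset.mem_Icc] at hx
      have : Finset.Icc a (x - 1) = insert a (Finset.Icc (a + 1) (x - 1)) := by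
        exact Icc_insert_left (by omega)
      rw [this, Finset.prod_insert (by simp)]
      ring
    set T := ∑ l ∈ Finset.Icc (a + 1) N, q l * ∏ r ∈ Finset.Icc (a + 1) (l - 1), ((Q r : ℤ) + 1)
      with hT
    have hqa : q a = 0 := by
      have hdvd : ((Q a : ℤ) + 1) ∣ q a := ⟨-T, by linarith⟩
      have habs : |q a| < (Q a : ℤ) + 1 := by
        have := hq a (Finset.mem_Icc.mpr ⟨le_refl a, haN'⟩)
        linarith
      exact Int.eq_zero_of_abs_lt_dvd hdvd habs
    have hTz : T = 0 := by
      have hne : ((Q a : ℤ) + 1) ≠ 0 := by positivity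
      have : ((Q a : ℤ) + 1) * T = 0 := by linarith
      exact (mul_eq_zero.mp this).resolve_left hne
    rcases Finset.mem_Icc.mp hl with ⟨hal, hlN⟩
    rcases eq_or_lt_of_le hal with h1 | h2
    · rw [← h1]; exact hqa
    · exact ih (a + 1) (by omega) (by omega)
        (fun m hm => hq m (Finset.mem_Icc.mpr
          ⟨by have := (Finset.mem_Icc.mp hm).1; omega, (Finset.mem_Icc.mp hm).2⟩))
        hTz l (Finset.mem_Icc.mpr ⟨by omega, hlN⟩)

/-- Mixed-radix cancellation: if |q_l| ≤ Q_l and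
q₁ = -Σ_{l=2}^N q_l ∏_{r=1}^{l-1}(Q_r + 1), then all q_l = 0. -/
theorem mixed_radix_cancellation (N : ℕ) (q : ℕ → ℤ) (Q : ℕ → ℕ)
    (hq : ∀ l ∈ Finset.Icc 1 N, |q l| ≤ (Q l : ℤ))
    (h : q 1 = -∑ l ∈ Finset.Icc 2 N,
        q l * ∏ r ∈ Finset.Icc 1 (l - 1), ((Q r : ℤ) + 1)) :
    ∀ l ∈ Finset.Icc 1 N, q l = 0 := by
  rcases Nat.eq_zero_or_pos N with hN | hN
  · intro l hl
    simp only [hN, Finset.mem_Icc] at hl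
    omega
  have hsum : (∑ l ∈ Finset.Icc 1 N, q l * ∏ r ∈ Finset.Icc 1 (l - 1), ((Q r : ℤ) + 1)) = 0 := by
    have hsplit : Finset.Icc 1 N = insert 1 (Finset.Icc 2 N) := by
      exact Icc_insert_left hN
    rw [hsplit, Finset.sum_insert (by simp)]
    simp only [show (1:ℕ) - 1 = 0 from rfl, Finset.Icc_eq_empty_of_lt (by norm_num : (0:ℕ) < 1),
      Finset.prod_empty, mul_one]
    linarith [h]
  exact mixed_radix_aux N q Q N 1 (le_refl 1) (by omega) hq hsum
end

section
/- Fix N ≥ 2, K ≥ 0, positive reals τ_1,…,τ_{N−1}, and define f(F_1,…,F_{N−1}) = Σ_{i=1}^{N−1} τ_i (F_i − K) / P_i, where P_i = ∏_{l=1}^i (1 + τ_l F_l). Then for each j, ∂f/∂F_j = [τ_j / ((1+τ_1F_1)⋯(1+τ_{j−1}F_{j−1})(1+τ_jF_j)^2)] · ( (1+τ_j K) − Σ_{i=j+1}^{N−1} τ_i (F_i − K) / P̃_{ij} ), where P̃_{ij} = (1+τ_{j+1}F_{j+1})⋯(1+τ_i F_i). -/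
/-!
Moving only `F_j` leaves the terms `i < j` constant and multiplies the denominator of every
term `i ≥ j` by the same factor `1 + τ_j F_j`. As a function of `F_j` the payoff is therefore
`C + (τ_j (F_j - K) + S) / (A (1 + τ_j F_j))` with `A = ∏_{l<j} (1 + τ_l F_l)` and `S` the tail
sum in the formula, and the quotient rule gives the result.
-/

open Finset Function

@[to_additive]
theorem Finset.prod_Icc_eq_prod_Ico_mul_mul_prod_Ioc {α M : Type*} [LinearOrder α]
    [LocallyFiniteOrder α] [CommMonoid M] (f : α → M) {a j b : α} (haj : a ≤ j) (hjb : j ≤ b) :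
    ∏ x ∈ Icc a b, f x = (∏ x ∈ Ico a j, f x) * f j * ∏ x ∈ Ioc j b, f x := by
  have hsplit : Icc a b = Ico a j ∪ Icc j b :=
    coe_injective <| by simp [Set.Ico_union_Icc_eq_Icc haj hjb]
  have hdisj : Disjoint (Ico a j) (Icc j b) :=
    disjoint_left.mpr fun x hx hx' => (mem_Ico.mp hx).2.not_ge (mem_Icc.mp hx').1
  rw [hsplit, prod_union hdisj, Icc_eq_cons_Ioc hjb, prod_cons, mul_assoc]

theorem Finset.prod_Icc_apply_update {α β M : Type*} [LinearOrder α] [LocallyFiniteOrder α]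
    [CommMonoid M] (g : α → β → M) (F : α → β) (x : β) {a j b : α} (haj : a ≤ j)
    (hjb : j ≤ b) :
    ∏ l ∈ Icc a b, g l (update F j x l) =
      (∏ l ∈ Ico a j, g l (F l)) * g j x * ∏ l ∈ Ioc j b, g l (F l) := by
  have hbelow : ∏ l ∈ Ico a j, g l (update F j x l) = ∏ l ∈ Ico a j, g l (F l) :=
    prod_congr rfl fun l hl => by rw [update_of_ne (mem_Ico.mp hl).2.ne]
  have habove : ∏ l ∈ Ioc j b, g l (update F j x l) = ∏ l ∈ Ioc j b, g l (F l) :=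
    prod_congr rfl fun l hl => by rw [update_of_ne (mem_Ioc.mp hl).1.ne']
  rw [prod_Icc_eq_prod_Ico_mul_mul_prod_Ioc (fun l => g l (update F j x l)) haj hjb, update_self,
    hbelow, habove]

theorem Finset.prod_Icc_apply_update_of_lt {α β M : Type*} [LinearOrder α] [LocallyFiniteOrder α]
    [CommMonoid M] (g : α → β → M) (F : α → β) (x : β) {a j b : α} (hbj : b < j) :
    ∏ l ∈ Icc a b, g l (update F j x l) = ∏ l ∈ Icc a b, g l (F l) :=
  prod_congr rfl fun l hl => by rw [update_of_ne ((mem_Icc.mp hl).2.trans_lt hbj).ne]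

theorem hasDerivAt_const_add_div_mul_one_add_mul (C S A K τ x : ℝ) (hA : A ≠ 0)
    (hx : 1 + τ * x ≠ 0) :
    HasDerivAt (fun t => C + (τ * (t - K) + S) / (A * (1 + τ * t)))
      (τ / (A * (1 + τ * x) ^ 2) * (1 + τ * K - S)) x := by
  have hnum : HasDerivAt (fun t => τ * (t - K) + S) τ x := by
    simpa using (((hasDerivAt_id x).sub_const K).const_mul τ).add_const S
  have hden : HasDerivAt (fun t => A * (1 + τ * t)) (A * τ) x := by
    simpa using (((hasDerivAt_id x).const_mul τ).const_add 1).const_mul A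
  refine ((hnum.div hden (mul_ne_zero hA hx)).const_add C).congr_deriv ?_
  field_simp
  ring

noncomputable def swaptionPayoff (τ : ℕ → ℝ) (K : ℝ) (n : ℕ) (F : ℕ → ℝ) : ℝ :=
  ∑ i ∈ Icc 1 n, τ i * (F i - K) / ∏ l ∈ Icc 1 i, (1 + τ l * F l)

theorem swaptionPayoff_update (τ F : ℕ → ℝ) (K t : ℝ) {n j : ℕ} (hj : j ∈ Icc 1 n) :
    swaptionPayoff τ K n (update F j t) =
      ∑ i ∈ Ico 1 j, τ i * (F i - K) / ∏ l ∈ Icc 1 i, (1 + τ l * F l) +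
        (τ j * (t - K) + ∑ i ∈ Ioc j n, τ i * (F i - K) / ∏ l ∈ Ioc j i, (1 + τ l * F l)) /
          ((∏ l ∈ Ico 1 j, (1 + τ l * F l)) * (1 + τ j * t)) := by
  obtain ⟨hj1, hjn⟩ := mem_Icc.mp hj
  have hprod {i : ℕ} (hji : j ≤ i) : ∏ l ∈ Icc 1 i, (1 + τ l * update F j t l) =
      (∏ l ∈ Ico 1 j, (1 + τ l * F l)) * (1 + τ j * t) * ∏ l ∈ Ioc j i, (1 + τ l * F l) :=
    prod_Icc_apply_update (fun l y => 1 + τ l * y) F t hj1 hji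
  have hlow : ∑ i ∈ Ico 1 j, τ i * (update F j t i - K) /
        ∏ l ∈ Icc 1 i, (1 + τ l * update F j t l) =
      ∑ i ∈ Ico 1 j, τ i * (F i - K) / ∏ l ∈ Icc 1 i, (1 + τ l * F l) :=
    sum_congr rfl fun i hi => by
      rw [update_of_ne (mem_Ico.mp hi).2.ne,
        prod_Icc_apply_update_of_lt (fun l y => 1 + τ l * y) F t (mem_Ico.mp hi).2]
  have hhigh : ∑ i ∈ Ioc j n, τ i * (update F j t i - K) /
        ∏ l ∈ Icc 1 i, (1 + τ l * update F j t l) =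
      (∑ i ∈ Ioc j n, τ i * (F i - K) / ∏ l ∈ Ioc j i, (1 + τ l * F l)) /
        ((∏ l ∈ Ico 1 j, (1 + τ l * F l)) * (1 + τ j * t)) := by
    rw [sum_div]
    refine sum_congr rfl fun i hi => ?_
    rw [update_of_ne (mem_Ioc.mp hi).1.ne', hprod (mem_Ioc.mp hi).1.le, div_mul_eq_div_div_swap]
  rw [swaptionPayoff, sum_Icc_eq_sum_Ico_add_add_sum_Ioc _ hj1 hjn, hlow, hhigh, hprod le_rfl,
    update_self, Ioc_self, prod_empty, mul_one, add_assoc, add_div]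

/-- Rates are indexed by `1, …, n` with `n = N - 1`. -/
theorem swaption_payoff_partial_deriv_general (n : ℕ)
    (τ : ℕ → ℝ) (K : ℝ)
    (F : ℕ → ℝ)
    (hpos : ∀ l ∈ Finset.Icc 1 n, 0 < 1 + τ l * F l)
    (j : ℕ) (hj : j ∈ Finset.Icc 1 n) :
    HasDerivAt
      (fun t : ℝ => ∑ i ∈ Finset.Icc 1 n,
        τ i * (Function.update F j t i - K) /
          ∏ l ∈ Finset.Icc 1 i, (1 + τ l * Function.update F j t l))
      (τ j /
          ((∏ l ∈ Finset.Icc 1 (j - 1), (1 + τ l * F l)) * (1 + τ j * F j) ^ 2) *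
        ((1 + τ j * K) -
          ∑ i ∈ Finset.Icc (j + 1) n,
            τ i * (F i - K) / ∏ l ∈ Finset.Icc (j + 1) i, (1 + τ l * F l)))
      (F j) := by
  obtain ⟨hj1, hjn⟩ := mem_Icc.mp hj
  have hIco : Icc 1 (j - 1) = Ico 1 j := by
    rw [← Ico_add_one_right_eq_Icc, Nat.sub_add_cancel hj1]
  have hA : ∏ l ∈ Ico 1 j, (1 + τ l * F l) ≠ 0 :=
    (prod_pos fun l hl => hpos l (mem_Icc.mpr ⟨(mem_Ico.mp hl).1, ((mem_Ico.mp hl).2.trans_le hjn).le⟩)).ne'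
  simp only [hIco, Icc_add_one_left_eq_Ioc]
  change HasDerivAt (fun t => swaptionPayoff τ K n (update F j t)) _ _
  rw [funext fun t => swaptionPayoff_update τ F K t hj]
  exact hasDerivAt_const_add_div_mul_one_add_mul _ _ _ K (τ j) (F j) hA (hpos j hj).ne'

/-- Closed form of the partial derivative of the approximated swaption payoff
f(F₁,…,F_{N-1}) = Σ_{i=1}^{N-1} τ_i (F_i - K)/∏_{l=1}^i (1+τ_l F_l)
with respect to F_j. Rates are indexed by 1,…,n with n = N-1 ≥ 1. -/
theorem swaption_payoff_partial_deriv (n : ℕ) (hn : 1 ≤ n)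
    (τ : ℕ → ℝ) (K : ℝ) (hτ : ∀ l ∈ Finset.Icc 1 n, 0 < τ l) (hK : 0 ≤ K)
    (F : ℕ → ℝ) (hF : ∀ l ∈ Finset.Icc 1 n, 0 ≤ F l)
    (hpos : ∀ l ∈ Finset.Icc 1 n, 0 < 1 + τ l * F l)
    (j : ℕ) (hj : j ∈ Finset.Icc 1 n) :
    HasDerivAt
      (fun t : ℝ => ∑ i ∈ Finset.Icc 1 n,
        τ i * (Function.update F j t i - K) /
          ∏ l ∈ Finset.Icc 1 i, (1 + τ l * Function.update F j t l))
      (τ j /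
          ((∏ l ∈ Finset.Icc 1 (j - 1), (1 + τ l * F l)) * (1 + τ j * F j) ^ 2) *
        ((1 + τ j * K) -
          ∑ i ∈ Finset.Icc (j + 1) n,
            τ i * (F i - K) / ∏ l ∈ Finset.Icc (j + 1) i, (1 + τ l * F l)))
      (F j) :=
  swaption_payoff_partial_deriv_general n τ K F hpos j hj
end

section
/- Let θ ∈ (0,1], Δt > 0, and let A be an L×L real matrix split as A = P + R, where P is the lower-triangular part of A including the diagonal and R is the strictly upper-triangular part. Suppose I − θΔt·P is invertible. Starting from W^{(0)} = W_n, define the Gauss–Seidel iterates by (I − θΔt·P) W^{(r)} = θΔt·R·W^{(r−1)} + β_n with β_n = (I − θΔt·A) W_n + Δt·A·W_n. Then for every r ≥ 1 one can write W^{(r)} = W_n + Σ_{j=1}^r K̂_j, where the vectors K̂_j satisfy (I − θΔt·P) K̂_r = Δt·A·(W_n + θ·Σ_{j=1}^{r−1} K̂_j) − Σ_{j=1}^{r−1} K̂_j for r = 1, 2, …. -/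
/-- The θ-method combined with Gauss–Seidel iteration, written as a W-method:
the Gauss–Seidel iterates W^{(r)} (with W^{(0)} = Wₙ) can be written as
W^{(r)} = Wₙ + Σ_{j=1}^r K̂_j where the increments K̂_r satisfy
(I - θΔt P) K̂_r = Δt A (Wₙ + θ Σ_{j<r} K̂_j) - Σ_{j<r} K̂_j. -/
theorem theta_gauss_seidel_as_W_method (L : ℕ) (θ Δt : ℝ)
    (hθ : 0 < θ ∧ θ ≤ 1) (hΔt : 0 < Δt)
    (A P R : Matrix (Fin L) (Fin L) ℝ)
    (hP : ∀ i j, P i j = if j ≤ i then A i j else 0)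
    (hR : ∀ i j, R i j = if i < j then A i j else 0)
    (hinv : IsUnit ((1 : Matrix (Fin L) (Fin L) ℝ) - (θ * Δt) • P))
    (Wn : Fin L → ℝ) (βn : Fin L → ℝ)
    (hβn : βn = ((1 : Matrix (Fin L) (Fin L) ℝ) - (θ * Δt) • A).mulVec Wn
        + Δt • A.mulVec Wn)
    (W : ℕ → Fin L → ℝ) (hW0 : W 0 = Wn)
    (hWr : ∀ r : ℕ, 1 ≤ r →
      ((1 : Matrix (Fin L) (Fin L) ℝ) - (θ * Δt) • P).mulVec (W r)
        = (θ * Δt) • R.mulVec (W (r - 1)) + βn) :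
    ∃ Khat : ℕ → Fin L → ℝ,
      (∀ r : ℕ, 1 ≤ r → W r = Wn + ∑ j ∈ Finset.Icc 1 r, Khat j) ∧
      (∀ r : ℕ, 1 ≤ r →
        ((1 : Matrix (Fin L) (Fin L) ℝ) - (θ * Δt) • P).mulVec (Khat r)
          = Δt • A.mulVec (Wn + θ • ∑ j ∈ Finset.Icc 1 (r - 1), Khat j)
            - ∑ j ∈ Finset.Icc 1 (r - 1), Khat j) := by

  have hPR : P + R = A := by
    ext i j
    by_cases h : j ≤ i
    · simp [hP, hR, h, not_lt.mpr h, Matrix.add_apply]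
    · simp [hP, hR, h, lt_of_not_ge h, Matrix.add_apply]
  have hsum0 : ∀ r : ℕ, Wn + ∑ j ∈ Finset.Icc 1 r, (W j - W (j - 1)) = W r := by
    intro r
    induction r with
    | zero => simp [hW0]
    | succ n ih =>
      rw [Finset.sum_Icc_succ_top (by omega : 1 ≤ n + 1), ← add_assoc, ih,
        Nat.add_sub_cancel]
      abel
  refine ⟨fun j => W j - W (j - 1), fun r _ => (hsum0 r).symm, ?_⟩
  intro r hr
  obtain ⟨n, rfl⟩ : ∃ n, r = n + 1 := ⟨r - 1, by omega⟩
  have hS : ∑ j ∈ Finset.Icc 1 n, (W j - W (j - 1)) = W n - Wn :=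
    eq_sub_of_add_eq' (hsum0 n)
  have h1 := hWr (n + 1) (by omega)
  simp only [Nat.add_sub_cancel] at h1 ⊢
  rw [hβn, ← hPR] at h1
  rw [hS, ← hPR, Matrix.mulVec_sub, h1]
  simp only [Matrix.sub_mulVec, Matrix.add_mulVec, Matrix.one_mulVec,
    Matrix.smul_mulVec, Matrix.mulVec_sub, Matrix.mulVec_add,
    Matrix.mulVec_smul, smul_add, smul_sub, smul_smul]
  module
end

section
/- Let β ∈ (0,1], σ > 0, and for i = 1,…,N−1 let α_i > 0, φ_i ∈ [−1,1], and F_i > 0, F_N ≥ 0. Define P_i^+ = α_i β/F_i^{1−β} + Σ_{j≠i, j≤N−1} (1/2) α_j ρ_{ij} β/F_j^{1−β} with ρ_{ij} = e^{−λ|T_i − T_j|}, λ ≥ 0. Suppose τ_i F_i ≤ β/(2−β) for 2 ≤ i ≤ N−2 and τ_{N−1} F_{N−1} ≤ β/(1−β) (no constraint when β = 1). Then P_i^+ − P_i^− ≥ 0 for 2 ≤ i ≤ N−1, where P_1^− = 0, P_2^− = α_2 Φ_β(F_2,τ_2), and P_i^− = α_i Φ_β(F_i,τ_i) + Σ_{j=2}^{i−1}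 α_j ρ_{ij} Φ_β(F_j,τ_j) for i ≥ 3, with Φ_β(x,τ) = τ x^β/(1+τx). -/
lemma phi_le_key {x t b c : ℝ} (hx : 0 < x) (ht : 0 ≤ t)
    (hratio : t * x ≤ c * (1 + t * x)) :
    t * x ^ b / (1 + t * x) ≤ c / x ^ (1 - b) := by
  have h1 : (0:ℝ) < 1 + t * x := by positivity
  have h2 : (0:ℝ) < x ^ (1 - b) := Real.rpow_pos_of_pos hx _
  rw [div_le_div_iff₀ h1 h2]
  have hx2 : x ^ b * x ^ (1 - b) = x := by
    rw [← Real.rpow_add hx]; simp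
  calc t * x ^ b * x ^ (1 - b) = t * x := by rw [mul_assoc, hx2]
    _ ≤ c * (1 + t * x) := hratio

/-- Inequality (pes): under the grid-truncation requirements
τ_i F_i ≤ β/(2-β) for 2 ≤ i ≤ N-2 and τ_{N-1} F_{N-1} ≤ β/(1-β) (no constraint
when β = 1), one has P_i⁺ - P_i⁻ ≥ 0 for 2 ≤ i ≤ N-1, where
Φ_β(x,τ) = τ x^β/(1+τx), ρ_{ij} = e^{-λ|T_i - T_j|},
P_i⁺ = α_i β/F_i^{1-β} + Σ_{j≠i,j≤N-1} ½ α_j ρ_{ij} β/F_j^{1-β}, and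
P_i⁻ = α_i Φ_β(F_i,τ_i) + Σ_{j=2}^{i-1} α_j ρ_{ij} Φ_β(F_j,τ_j). -/
theorem advection_coefficients_nonneg (N : ℕ) (hN : 3 ≤ N)
    (β σ lam K : ℝ) (hβ0 : 0 < β) (hβ1 : β ≤ 1) (hσ : 0 < σ) (hlam : 0 ≤ lam)
    (α τ F T φ : ℕ → ℝ)
    (hα : ∀ i ∈ Finset.Icc 1 (N - 1), 0 < α i)
    (hτ : ∀ i ∈ Finset.Icc 1 (N - 1), 0 < τ i)
    (hF : ∀ i ∈ Finset.Icc 1 (N - 1), 0 < F i)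
    (hFN : 0 ≤ F N)
    (hφ : ∀ i ∈ Finset.Icc 1 (N - 1), -1 ≤ φ i ∧ φ i ≤ 1)
    (hreq1 : ∀ i ∈ Finset.Icc 2 (N - 2), τ i * F i ≤ β / (2 - β))
    (hreq2 : β < 1 → τ (N - 1) * F (N - 1) ≤ β / (1 - β)) :
    ∀ i ∈ Finset.Icc 2 (N - 1),
      0 ≤ (α i * β / F i ^ (1 - β)
            + ∑ j ∈ (Finset.Icc 1 (N - 1)).erase i,
                (1 / 2) * α j * Real.exp (-lam * |T i - T j|) * β / F j ^ (1 - β))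
          - (α i * (τ i * F i ^ β / (1 + τ i * F i))
            + ∑ j ∈ Finset.Icc 2 (i - 1),
                α j * Real.exp (-lam * |T i - T j|) *
                  (τ j * F j ^ β / (1 + τ j * F j))) := by
  intro i hi
  rw [Finset.mem_Icc] at hi
  obtain ⟨hi2, hiN⟩ := hi
  have hβ2 : (0:ℝ) < 2 - β := by linarith
  have himem : i ∈ Finset.Icc 1 (N - 1) := by rw [Finset.mem_Icc]; omega
  have hFi := hF i himem
  have hαi := hα i himem
  have hτi := hτ i himem
  -- diagonal term comparison
  have hratio_i : τ i * F i ≤ β * (1 + τ i * F i) := by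
    have h0 : 0 ≤ τ i * F i := by positivity
    rcases eq_or_lt_of_le hiN with h | h
    · -- i = N - 1
      rcases lt_or_eq_of_le hβ1 with hb | hb
      · have := hreq2 hb
        rw [← h] at this
        rw [le_div_iff₀ (by linarith)] at this
        nlinarith
      · rw [hb]; linarith
    · -- i ≤ N - 2
      have := hreq1 i (by rw [Finset.mem_Icc]; omega)
      rw [le_div_iff₀ hβ2] at this
      nlinarith
  have hdiag : α i * (τ i * F i ^ β / (1 + τ i * F i)) ≤ α i * β / F i ^ (1 - β) := by
    have hkey := phi_le_key (b := β) hFi hτi.le hratio_i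
    calc α i * (τ i * F i ^ β / (1 + τ i * F i))
        ≤ α i * (β / F i ^ (1 - β)) := mul_le_mul_of_nonneg_left hkey hαi.le
      _ = α i * β / F i ^ (1 - β) := by ring
  -- sum comparison, termwise on Icc 2 (i-1)
  have hsum1 : ∑ j ∈ Finset.Icc 2 (i - 1),
        α j * Real.exp (-lam * |T i - T j|) * (τ j * F j ^ β / (1 + τ j * F j))
      ≤ ∑ j ∈ Finset.Icc 2 (i - 1),
        (1 / 2) * α j * Real.exp (-lam * |T i - T j|) * β / F j ^ (1 - β) := by
    apply Finset.sum_le_sum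
    intro j hj
    rw [Finset.mem_Icc] at hj
    have hjmem : j ∈ Finset.Icc 1 (N - 1) := by rw [Finset.mem_Icc]; omega
    have hFj := hF j hjmem
    have hαj := hα j hjmem
    have hτj := hτ j hjmem
    have hreq := hreq1 j (by rw [Finset.mem_Icc]; omega)
    rw [le_div_iff₀ hβ2] at hreq
    have hratio : τ j * F j ≤ (β / 2) * (1 + τ j * F j) := by nlinarith
    have hkey := phi_le_key (b := β) hFj hτj.le hratio
    have hρ : (0:ℝ) < Real.exp (-lam * |T i - T j|) := Real.exp_pos _
    calc α j * Real.exp (-lam * |T i - T j|) * (τ j * F j ^ β / (1 + τ j * F j))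
        ≤ α j * Real.exp (-lam * |T i - T j|) * ((β / 2) / F j ^ (1 - β)) := by
          exact mul_le_mul_of_nonneg_left hkey (by positivity)
      _ = (1 / 2) * α j * Real.exp (-lam * |T i - T j|) * β / F j ^ (1 - β) := by ring
  have hsum2 : ∑ j ∈ Finset.Icc 2 (i - 1),
        (1 / 2) * α j * Real.exp (-lam * |T i - T j|) * β / F j ^ (1 - β)
      ≤ ∑ j ∈ (Finset.Icc 1 (N - 1)).erase i,
        (1 / 2) * α j * Real.exp (-lam * |T i - T j|) * β / F j ^ (1 - β) := by
    apply Finset.sum_le_sum_of_subset_of_nonneg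
    · intro j hj
      rw [Finset.mem_Icc] at hj
      rw [Finset.mem_erase, Finset.mem_Icc]
      omega
    · intro j hj _
      have hjmem : j ∈ Finset.Icc 1 (N - 1) := Finset.mem_of_mem_erase hj
      have hFj := hF j hjmem
      have hαj := hα j hjmem
      have hρ : (0:ℝ) < Real.exp (-lam * |T i - T j|) := Real.exp_pos _
      positivity
  linarith
end
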